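/- Let F be a weakly convex sparseness measure, J(x) = Σ_{i=1}^N F(x_i), and let γ ∈ [0,1) be a null-space constant bound for (J,A,K). Let M0 > 0 and define C1 = (F(M0)/M0)·(1−γ)/(1+γ) and C2 = (α√N + C1)/(C1·σ). Then for all vectors x*, x ∈ ℝ^N with ‖x*‖₀ ≤ K, ‖x − x*‖₂ ≤ M0, and ‖x − x*‖₂ ≥ 2·C2·‖A(x − x*)‖₂, one has J(x) − J(x*) ≥ (C1/2)·‖x − x*‖₂. -/

import Mathlib

open Filter Set

/-- Weak convexity on `[0,∞)` with parameter `ρ`. -/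
def WeaklyConvexOnNonneg (F : ℝ → ℝ) (ρ : ℝ) : Prop :=
  ∀ t₁ t₂ : ℝ, 0 ≤ t₁ → 0 ≤ t₂ → ∀ l : ℝ, 0 ≤ l → l ≤ 1 →
    F (l * t₁ + (1 - l) * t₂) ≤
      l * F t₁ + (1 - l) * F t₂ - ρ * l * (1 - l) * (t₁ - t₂) ^ 2

/-- `F` is a weakly convex sparseness measure with weak-convexity parameter `ρ ≤ 0`. -/
structure IsWCSM (F : ℝ → ℝ) (ρ : ℝ) : Prop where
  zero : F 0 = 0
  even : ∀ t, F (-t) = F t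
  nontrivial : ∃ t, F t ≠ 0
  mono : ∀ s t : ℝ, 0 ≤ s → s ≤ t → F s ≤ F t
  ratio_anti : ∀ s t : ℝ, 0 < s → s ≤ t → F t / t ≤ F s / s
  rho_nonpos : ρ ≤ 0
  wconv : WeaklyConvexOnNonneg F ρ

/-- `α = lim_{t→0⁺} F(t)/t`, finite and positive, with `F(t) ≤ α|t|` for all `t`. -/
def IsAlpha (F : ℝ → ℝ) (α : ℝ) : Prop :=
  0 < α ∧ Tendsto (fun t => F t / t) (nhdsWithin 0 (Set.Ioi 0)) (nhds α) ∧
    ∀ t : ℝ, F t ≤ α * |t|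

/-- The generalized gradient set `∂F(t)`; by convention `∂F(0) = {0}`. -/
noncomputable def genGrad (F : ℝ → ℝ) (t : ℝ) : Set ℝ :=
  if t = 0 then {0}
  else {f : ℝ | ∀ ν : ℝ,
    ν * f ≤ Filter.limsup (fun θ => (F (t + θ * ν) - F t) / θ) (nhdsWithin 0 (Set.Ioi 0))}

/-- Euclidean (`ℓ2`) norm of a vector. -/
noncomputable def l2 {n : ℕ} (x : Fin n → ℝ) : ℝ := Real.sqrt (∑ i, (x i) ^ 2)

/-- `ℓ1` norm of a vector. -/
def l1 {n : ℕ} (x : Fin n → ℝ) : ℝ := ∑ i, |x i|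

/-- `ℓ0` "norm": number of nonzero entries. -/
noncomputable def l0 {n : ℕ} (x : Fin n → ℝ) : ℕ :=
  (Finset.univ.filter (fun i => x i ≠ 0)).card

/-- `z_S`: the vector equal to `z` on `S` and zero elsewhere. -/
def restr {n : ℕ} (x : Fin n → ℝ) (S : Finset (Fin n)) : Fin n → ℝ :=
  fun i => if i ∈ S then x i else 0

/-- `γ` is a null-space-constant bound for `(J, A, K)`. -/
def NSCBound {M N : ℕ} (J : (Fin N → ℝ) → ℝ) (A : Matrix (Fin M) (Fin N) ℝ)
    (K : ℕ) (γ : ℝ) : Prop :=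
  ∀ z : Fin N → ℝ, A.mulVec z = 0 → ∀ S : Finset (Fin N), S.card ≤ K →
    J (restr z S) ≤ γ * J (restr z Sᶜ)

/-- Spectral norm (`ℓ2`-operator norm) of a matrix. -/
noncomputable def opNorm2 {m n : ℕ} (A : Matrix (Fin m) (Fin n) ℝ) : ℝ :=
  sSup {c : ℝ | ∃ v : Fin n → ℝ, l2 v ≤ 1 ∧ c = l2 (A.mulVec v)}

/-!
Write `x - xs = z + v` with `z ∈ ker A` and `v ⊥ ker A`. As `xs` is `K`-sparse, the null-space
property gives `J(xs + z) - J(xs) ≥ (1 - γ)/(1 + γ) · J(z)`, and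
`J(z) ≥ (F M₀ / M₀) · min(‖z‖₁, M₀) ≥ (F M₀ / M₀) · (‖x - xs‖₂ - ‖v‖₂)`.
Passing from `xs + z` to `x` costs at most `α √N ‖v‖₂`, because `F` is subadditive and
`F(t) ≤ α|t|`. Finally `σ ‖v‖₂ ≤ ‖A(x - xs)‖₂`, and `C₂` is chosen so that the total loss
`(C₁ + α√N) ‖v‖₂` is at most half of the gain `C₁ ‖x - xs‖₂`.
-/

open Matrix

namespace IsWCSM

variable {F : ℝ → ℝ} {ρ : ℝ}

lemma apply_abs (hF : IsWCSM F ρ) (t : ℝ) : F |t| = F t := by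
  rcases abs_cases t with ⟨h, _⟩ | ⟨h, _⟩ <;> simp [h, hF.even]

lemma nonneg (hF : IsWCSM F ρ) (t : ℝ) : 0 ≤ F t := by
  rw [← hF.apply_abs, ← hF.zero]
  exact hF.mono 0 |t| le_rfl (abs_nonneg t)

lemma add_le_of_nonneg (hF : IsWCSM F ρ) {s t : ℝ} (hs : 0 ≤ s) (ht : 0 ≤ t) :
    F (s + t) ≤ F s + F t := by
  rcases hs.eq_or_lt with rfl | hs
  · simp [hF.zero]
  rcases ht.eq_or_lt with rfl | ht
  · simp [hF.zero]
  have hs' := hF.ratio_anti s (s + t) hs (by linarith)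
  have ht' := hF.ratio_anti t (s + t) ht (by linarith)
  rw [div_le_div_iff₀ (by linarith) hs] at hs'
  rw [div_le_div_iff₀ (by linarith) ht] at ht'
  nlinarith

lemma add_le (hF : IsWCSM F ρ) (s t : ℝ) : F (s + t) ≤ F s + F t :=
  calc F (s + t) = F |s + t| := (hF.apply_abs _).symm
    _ ≤ F (|s| + |t|) := hF.mono _ _ (abs_nonneg _) (abs_add_le s t)
    _ ≤ F |s| + F |t| := hF.add_le_of_nonneg (abs_nonneg s) (abs_nonneg t)
    _ = F s + F t := by rw [hF.apply_abs, hF.apply_abs]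

lemma sub_le (hF : IsWCSM F ρ) (s t : ℝ) : F s - F t ≤ F (s - t) := by
  have := hF.add_le (s - t) t
  rw [sub_add_cancel] at this
  linarith

lemma div_mul_le (hF : IsWCSM F ρ) {M₀ t : ℝ} (ht : 0 ≤ t) (htM : t ≤ M₀) :
    F M₀ / M₀ * t ≤ F t := by
  rcases ht.eq_or_lt with rfl | ht
  · simp [hF.zero]
  have := hF.ratio_anti t M₀ ht htM
  rwa [le_div_iff₀ ht] at this

lemma pos (hF : IsWCSM F ρ) {t : ℝ} (ht : 0 < t) : 0 < F t := by
  obtain ⟨s, hs⟩ := hF.nontrivial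
  have hs_pos : 0 < F |s| := (hF.apply_abs s).symm ▸ (hF.nonneg s).lt_of_ne' hs
  have habs : 0 < |s| := abs_pos.2 fun h => by simp [h, hF.zero] at hs
  rcases le_or_gt |s| t with hst | hst
  · exact hs_pos.trans_le (hF.mono _ _ (abs_nonneg s) hst)
  · have := (div_pos hs_pos habs).trans_le (hF.ratio_anti t |s| ht hst.le)
    exact (div_pos_iff_of_pos_right ht).1 this

end IsWCSM

section Norms

variable {n : ℕ}

lemma l2_eq_norm (x : Fin n → ℝ) : l2 x = ‖WithLp.toLp 2 x‖ := by
  simp [l2, EuclideanSpace.norm_eq]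

lemma l2_nonneg (x : Fin n → ℝ) : 0 ≤ l2 x := Real.sqrt_nonneg _

lemma l2_add_le (x y : Fin n → ℝ) : l2 (x + y) ≤ l2 x + l2 y := by
  simpa only [l2_eq_norm, WithLp.toLp_add] using norm_add_le _ _

lemma l2_le_l1 (x : Fin n → ℝ) : l2 x ≤ l1 x := by
  have hl1 : 0 ≤ l1 x := Finset.sum_nonneg fun i _ => abs_nonneg (x i)
  rw [l2, Real.sqrt_le_left hl1]
  simpa [l1, sq_abs] using
    Finset.sum_sq_le_sq_sum_of_nonneg (s := Finset.univ) fun i _ => abs_nonneg (x i)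

lemma l1_le_sqrt_mul_l2 (x : Fin n → ℝ) : l1 x ≤ Real.sqrt n * l2 x := by
  rw [l2, ← Real.sqrt_mul (Nat.cast_nonneg n)]
  apply Real.le_sqrt_of_sq_le
  simpa [l1, sq_abs] using sq_sum_le_card_mul_sum_sq (s := Finset.univ) (f := fun i => |x i|)

end Norms

lemma exists_ker_add_orthogonal {m n : ℕ} (A : Matrix (Fin m) (Fin n) ℝ) (h : Fin n → ℝ) :
    ∃ z : Fin n → ℝ, A *ᵥ z = 0 ∧ ∀ y : Fin n → ℝ, A *ᵥ y = 0 → ∑ i, (h - z) i * y i = 0 := by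
  let W := LinearMap.ker (toLpLin 2 2 A)
  obtain ⟨z, hz, v, hv, hzv⟩ := W.exists_add_mem_mem_orthogonal (WithLp.toLp 2 h)
  have hker : ∀ y, WithLp.toLp 2 y ∈ W ↔ A *ᵥ y = 0 := fun y => by
    simp [W, toLpLin_apply]
  refine ⟨z.ofLp, (hker _).1 hz, fun y hy => ?_⟩
  have hv' : h - z.ofLp = v.ofLp := by
    rw [← WithLp.ofLp_toLp 2 h, hzv]
    simp
  rw [hv']
  simpa [PiLp.inner_apply, mul_comm] using
    (W.mem_orthogonal v).1 hv (WithLp.toLp 2 y) ((hker y).2 hy)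

section Penalty

variable {F : ℝ → ℝ} {ρ : ℝ} {n : ℕ}

lemma sum_restr (hF₀ : F 0 = 0) (z : Fin n → ℝ) (S : Finset (Fin n)) :
    ∑ i, F (restr z S i) = ∑ i ∈ S, F (z i) := by
  simp [restr, apply_ite F, hF₀, Finset.sum_ite_mem]

lemma IsWCSM.div_mul_min_le_sum (hF : IsWCSM F ρ) {M₀ : ℝ} (hM₀ : 0 < M₀) (z : Fin n → ℝ) :
    F M₀ / M₀ * min (l1 z) M₀ ≤ ∑ i, F (z i) := by
  have hβ : 0 ≤ F M₀ / M₀ := (div_pos (hF.pos hM₀) hM₀).le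
  by_cases hbig : ∃ i, M₀ < |z i|
  · obtain ⟨i, hi⟩ := hbig
    calc F M₀ / M₀ * min (l1 z) M₀ ≤ F M₀ / M₀ * M₀ := by gcongr; exact min_le_right _ _
      _ = F M₀ := div_mul_cancel₀ _ hM₀.ne'
      _ ≤ F (z i) := hF.apply_abs (z i) ▸ hF.mono _ _ hM₀.le hi.le
      _ ≤ ∑ j, F (z j) := Finset.single_le_sum (fun j _ => hF.nonneg (z j)) (Finset.mem_univ i)
  · push Not at hbig
    calc F M₀ / M₀ * min (l1 z) M₀ ≤ F M₀ / M₀ * l1 z := by gcongr; exact min_le_left _ _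
      _ = ∑ i, F M₀ / M₀ * |z i| := Finset.mul_sum _ _ _
      _ ≤ ∑ i, F (z i) := Finset.sum_le_sum fun i _ =>
        (hF.div_mul_le (abs_nonneg _) (hbig i)).trans_eq (hF.apply_abs _)

lemma IsWCSM.sum_compl_sub_sum_le (hF : IsWCSM F ρ) {xs : Fin n → ℝ} {S : Finset (Fin n)}
    (hS : ∀ i ∉ S, xs i = 0) (z : Fin n → ℝ) :
    ∑ i ∈ Sᶜ, F (z i) - ∑ i ∈ S, F (z i) ≤ ∑ i, F (xs i + z i) - ∑ i, F (xs i) := by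
  have hcompl : ∀ i ∈ Sᶜ, F (xs i + z i) - F (xs i) = F (z i) := fun i hi => by
    simp [hS i (Finset.mem_compl.1 hi), hF.zero]
  have hsupp : ∀ i ∈ S, -F (z i) ≤ F (xs i + z i) - F (xs i) := fun i _ => by
    have := hF.sub_le (xs i) (xs i + z i)
    rw [sub_add_cancel_left, hF.even] at this
    linarith
  rw [← Finset.sum_sub_distrib, ← Finset.sum_add_sum_compl S, Finset.sum_congr rfl hcompl,
    sub_eq_neg_add, ← Finset.sum_neg_distrib]
  gcongr ?_ + _
  exact Finset.sum_le_sum hsupp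

lemma NSCBound.mul_sum_le_sum_add_sub_sum {M K : ℕ} {A : Matrix (Fin M) (Fin n) ℝ} {γ : ℝ}
    (hNSC : NSCBound (fun x => ∑ i, F (x i)) A K γ) (hF : IsWCSM F ρ) (hγ : -1 < γ)
    {xs z : Fin n → ℝ} (hK : l0 xs ≤ K) (hz : A *ᵥ z = 0) :
    (1 - γ) / (1 + γ) * ∑ i, F (z i) ≤ ∑ i, F (xs i + z i) - ∑ i, F (xs i) := by
  set S := Finset.univ.filter fun i => xs i ≠ 0
  have hS : ∑ i ∈ S, F (z i) ≤ γ * ∑ i ∈ Sᶜ, F (z i) := by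
    simpa only [sum_restr hF.zero] using hNSC z hz S hK
  have hsupp := hF.sum_compl_sub_sum_le (xs := xs) (S := S) (by simp [S]) z
  have hSc : 0 ≤ ∑ i ∈ Sᶜ, F (z i) := Finset.sum_nonneg fun i _ => hF.nonneg _
  rw [← Finset.sum_add_sum_compl S, div_mul_eq_mul_div, div_le_iff₀ (by linarith)]
  nlinarith

lemma IsWCSM.sum_sub_sum_le (hF : IsWCSM F ρ) {α : ℝ} (hα : ∀ t, F t ≤ α * |t|)
    (u w : Fin n → ℝ) : ∑ i, F (u i) - ∑ i, F (w i) ≤ α * l1 (w - u) := by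
  rw [← Finset.sum_sub_distrib, l1, Finset.mul_sum]
  gcongr with i
  calc F (u i) - F (w i) ≤ F (w i - u i) := by
        rw [← neg_sub (u i), hF.even]
        exact hF.sub_le _ _
    _ ≤ α * |w i - u i| := hα _

end Penalty

theorem le_sum_sub_sum_of_mulVec_eq_zero {n M K : ℕ} {F : ℝ → ℝ} {ρ α γ M₀ C₁ : ℝ}
    {A : Matrix (Fin M) (Fin n) ℝ} (hF : IsWCSM F ρ) (hα : ∀ t, F t ≤ α * |t|)
    (hγ₀ : -1 < γ) (hγ₁ : γ ≤ 1) (hNSC : NSCBound (fun x => ∑ i, F (x i)) A K γ)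
    (hM₀ : 0 < M₀) (hC₁ : C₁ = F M₀ / M₀ * ((1 - γ) / (1 + γ)))
    {xs x z : Fin n → ℝ} (hK : l0 xs ≤ K) (hM : l2 (x - xs) ≤ M₀) (hz : A *ᵥ z = 0) :
    C₁ * l2 (x - xs) - (C₁ + α * Real.sqrt n) * l2 (x - xs - z) ≤
      ∑ i, F (x i) - ∑ i, F (xs i) := by
  have hα₀ : 0 ≤ α := by simpa using (hF.nonneg 1).trans (hα 1)
  have hβ : 0 ≤ F M₀ / M₀ := (div_pos (hF.pos hM₀) hM₀).le
  have hmin : l2 (x - xs) - l2 (x - xs - z) ≤ min (l1 z) M₀ := by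
    refine le_min ?_ (by linarith [l2_nonneg (x - xs - z)])
    have := l2_add_le z (x - xs - z)
    rw [add_sub_cancel] at this
    linarith [l2_le_l1 z]
  have hgain : C₁ * (l2 (x - xs) - l2 (x - xs - z)) ≤ (1 - γ) / (1 + γ) * ∑ i, F (z i) := by
    rw [hC₁, mul_comm (F M₀ / M₀), mul_assoc]
    gcongr
    · exact div_nonneg (by linarith) (by linarith)
    · exact (mul_le_mul_of_nonneg_left hmin hβ).trans (hF.div_mul_min_le_sum hM₀ z)
  have hnull := hNSC.mul_sum_le_sum_add_sub_sum hF hγ₀ hK hz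
  have hcost := (hF.sum_sub_sum_le hα (xs + z) x).trans
    (mul_le_mul_of_nonneg_left (l1_le_sqrt_mul_l2 _) hα₀)
  simp only [Pi.add_apply, ← sub_sub] at hcost
  linarith

theorem stmt10_general {M N : ℕ} (F : ℝ → ℝ) (ρ α : ℝ)
    (hF : IsWCSM F ρ) (hα : IsAlpha F α)
    (A : Matrix (Fin M) (Fin N) ℝ) (K : ℕ)
    (γ : ℝ) (hγ0 : 0 ≤ γ) (hγ1 : γ < 1)
    (hNSC : NSCBound (fun x => ∑ i, F (x i)) A K γ)
    (σ : ℝ) (hσ : 0 < σ)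
    (hσmin : ∀ v : Fin N → ℝ,
      (∀ z : Fin N → ℝ, A.mulVec z = 0 → (∑ i, v i * z i) = 0) →
      σ * l2 v ≤ l2 (A.mulVec v))
    (M0 : ℝ) (hM0 : 0 < M0) (C1 C2 : ℝ)
    (hC1 : C1 = F M0 / M0 * ((1 - γ) / (1 + γ)))
    (hC2 : C2 = (α * Real.sqrt N + C1) / (C1 * σ)) :
    ∀ xs x : Fin N → ℝ, l0 xs ≤ K → l2 (x - xs) ≤ M0 →
      2 * C2 * l2 (A.mulVec (x - xs)) ≤ l2 (x - xs) →
      C1 / 2 * l2 (x - xs) ≤ (∑ i, F (x i)) - ∑ i, F (xs i) := by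
  intro xs x hK hM hAh
  obtain ⟨z, hz, horth⟩ := exists_ker_add_orthogonal A (x - xs)
  have hv : σ * l2 (x - xs - z) ≤ l2 (A *ᵥ (x - xs)) := by
    simpa [mulVec_sub, hz] using hσmin _ horth
  have hkey := le_sum_sub_sum_of_mulVec_eq_zero hF hα.2.2 (by linarith) hγ1.le hNSC hM0 hC1
    hK hM hz
  have hC1_pos : 0 < C1 :=
    hC1 ▸ mul_pos (div_pos (hF.pos hM0) hM0) (div_pos (by linarith) (by linarith))
  have hC2_pos : 0 ≤ C2 := hC2 ▸ by have := hα.1; positivity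
  have hcost : (C1 + α * Real.sqrt N) * l2 (x - xs - z) ≤ C1 / 2 * l2 (x - xs) :=
    calc (C1 + α * Real.sqrt N) * l2 (x - xs - z) = C2 * C1 * (σ * l2 (x - xs - z)) := by
          rw [hC2]; field_simp; ring
      _ ≤ C2 * C1 * l2 (A *ᵥ (x - xs)) := by gcongr
      _ = C1 / 2 * (2 * C2 * l2 (A *ᵥ (x - xs))) := by ring
      _ ≤ C1 / 2 * l2 (x - xs) := by gcongr
  linarith

/-- Corollary 1: `J(x) − J(x*) ≥ (C1/2)‖x − x*‖₂` when additionally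
`‖x − x*‖₂ ≥ 2C2‖A(x − x*)‖₂`. -/
theorem stmt10 {M N : ℕ} (hMN : M < N) (F : ℝ → ℝ) (ρ α : ℝ)
    (hF : IsWCSM F ρ) (hα : IsAlpha F α)
    (A : Matrix (Fin M) (Fin N) ℝ) (K : ℕ)
    (γ : ℝ) (hγ0 : 0 ≤ γ) (hγ1 : γ < 1)
    (hNSC : NSCBound (fun x => ∑ i, F (x i)) A K γ)
    (σ : ℝ) (hσ : 0 < σ)
    (hσmin : ∀ v : Fin N → ℝ,
      (∀ z : Fin N → ℝ, A.mulVec z = 0 → (∑ i, v i * z i) = 0) →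
      σ * l2 v ≤ l2 (A.mulVec v))
    (M0 : ℝ) (hM0 : 0 < M0) (C1 C2 : ℝ)
    (hC1 : C1 = F M0 / M0 * ((1 - γ) / (1 + γ)))
    (hC2 : C2 = (α * Real.sqrt N + C1) / (C1 * σ)) :
    ∀ xs x : Fin N → ℝ, l0 xs ≤ K → l2 (x - xs) ≤ M0 →
      2 * C2 * l2 (A.mulVec (x - xs)) ≤ l2 (x - xs) →
      C1 / 2 * l2 (x - xs) ≤ (∑ i, F (x i)) - ∑ i, F (xs i) :=
  stmt10_general F ρ α hF hα A K γ hγ0 hγ1 hNSC σ hσ hσmin M0 hM0 C1 C2 hC1 hC2
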